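/- If λ is a regular uncountable cardinal and D is a weakly reasonable uniform ultrafilter on λ, then D is a regular ultrafilter: there is a sequence ⟨A_ε : ε < λ⟩ of members of D such that for every α < λ the set {ε < λ : α ∈ A_ε} is finite. -/

import Mathlib

open Set Ordinal Cardinal

noncomputable section

namespace Sh830

/-- `D` is a (proper) ultrafilter on the set `Z` of ordinals. -/
def IsUltraOn (Z : Set Ordinal) (D : Set (Set Ordinal)) : Prop :=
  (∀ A ∈ D, A ⊆ Z) ∧ Z ∈ D ∧ ∅ ∉ D ∧
  (∀ A B : Set Ordinal, A ∈ D → A ⊆ B → B ⊆ Z → B ∈ D) ∧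
  (∀ A B : Set Ordinal, A ∈ D → B ∈ D → A ∩ B ∈ D) ∧
  (∀ A : Set Ordinal, A ⊆ Z → A ∈ D ∨ Z \ A ∈ D)

/-- `D` is an ultrafilter on `λ`, where `λ` is identified with the set of ordinals `< λ`. -/
def IsUltrafilterOn (l : Ordinal) (D : Set (Set Ordinal)) : Prop :=
  IsUltraOn (Iio l) D

/-- `D` is uniform: every member of `D` has cardinality `λ`. -/
def IsUniformOn (l : Ordinal) (D : Set (Set Ordinal)) : Prop :=
  ∀ A ∈ D, #A = #(Iio l)

/-- `C` is a club (closed and unbounded) subset of `λ`. -/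
def IsClubIn (C : Set Ordinal) (l : Ordinal) : Prop :=
  C ⊆ Iio l ∧
  (∀ δ, δ < l → δ ≠ 0 → sSup (C ∩ Iio δ) = δ → δ ∈ C) ∧
  (∀ α, α < l → ∃ β ∈ C, α < β)

/-- The quotient `D/f = {A ⊆ λ : f⁻¹(A) ∈ D}`. -/
def quotUF (l : Ordinal) (D : Set (Set Ordinal)) (f : Ordinal → Ordinal) :
    Set (Set Ordinal) :=
  {A | A ⊆ Iio l ∧ Iio l ∩ f ⁻¹' A ∈ D}

/-- The family `F_λ` of all non-decreasing functions `λ → λ` with unbounded range. -/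
def Flam (l : Ordinal) : Set (Ordinal → Ordinal) :=
  {f | (∀ α, α < l → f α < l) ∧ (∀ α β, α ≤ β → β < l → f α ≤ f β) ∧
    (∀ γ, γ < l → ∃ α, α < l ∧ γ ≤ f α)}

/-- `D` is weakly reasonable: for every `f ∈ F_λ` there is a club `C` of `λ` with
`∪ {[δ, δ + f δ) : δ ∈ C} ∉ D`. -/
def WeaklyReasonable (l : Ordinal) (D : Set (Set Ordinal)) : Prop :=
  ∀ f ∈ Flam l, ∃ C, IsClubIn C l ∧ (⋃ δ ∈ C, Ico δ (δ + f δ)) ∉ D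

/-- The order type of a set of ordinals: the (unique) ordinal order-isomorphic to it. -/
def setOtp (S : Set Ordinal) : Ordinal :=
  sInf {o : Ordinal | Nonempty (Iio o ≃o S)}

/-- `min(β/E)`: the least element of the `E`-equivalence class of `β`. -/
def minClass (E : Ordinal → Ordinal → Prop) (β : Ordinal) : Ordinal :=
  sInf {γ | E γ β}

/-- The function `f_E` associated with an equivalence relation `E`:
`f_E α = otp {β < α : β = min(β/E) < min(α/E)}`. -/
def fEquiv (E : Ordinal → Ordinal → Prop) (α : Ordinal) : Ordinal :=
  setOtp {β | β < α ∧ β = minClass E β ∧ minClass E β < minClass E α}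

/-- The equivalence relation `E_C` associated with a club `C`:
`α E_C β` iff `(∀ γ ∈ C)(α < γ ↔ β < γ)`. -/
def clubRel (C : Set Ordinal) (α β : Ordinal) : Prop :=
  ∀ γ ∈ C, (α < γ ↔ β < γ)

/-- The quotient `D/C = D/E_C = D/f_{E_C}`. -/
def quotClub (l : Ordinal) (D : Set (Set Ordinal)) (C : Set Ordinal) :
    Set (Set Ordinal) :=
  quotUF l D (fEquiv (clubRel C))

/-- A strategy for Odd in the game `⅁_D`: given `i < λ`, Even's moves `β_j = α_{2j}`
for `j ≤ i`, and Odd's previous moves `γ_j = α_{2j+1}` for `j < i`, it produces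
Odd's move `γ_i = α_{2i+1}`. -/
def OddStr : Type 1 :=
  (i : Ordinal) → ((j : Ordinal) → j ≤ i → Ordinal) → ((j : Ordinal) → j < i → Ordinal) → Ordinal

/-- A legal position of the game just before Odd's `i`-th move. -/
def IsPosition (l i : Ordinal) (β γ : Ordinal → Ordinal) : Prop :=
  i < l ∧ (∀ j, j ≤ i → β j < l) ∧ (∀ j, j < i → β j < γ j ∧ γ j < l) ∧
  (∀ j, j < i → γ j < β (j + 1)) ∧
  (∀ j, j ≤ i → Order.IsSuccLimit j → β j = sSup (γ '' Iio j))

/-- A complete legal play of the game of length `λ`: `β i` is `α_{2i}`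
(Even's move) and `γ i` is `α_{2i+1}` (Odd's move). -/
def IsPlay (l : Ordinal) (β γ : Ordinal → Ordinal) : Prop :=
  (∀ i, i < l → β i < l ∧ γ i < l) ∧ (∀ i, i < l → β i < γ i) ∧
  (∀ i, i + 1 < l → γ i < β (i + 1)) ∧
  (∀ i, i < l → Order.IsSuccLimit i → β i = sSup (γ '' Iio i))

/-- `st` is a legal strategy for Odd: at every legal position it produces a legal move,
i.e. an ordinal `α_{2i+1}` with `α_{2i} < α_{2i+1} < λ`. -/
def IsOddStrategy (l : Ordinal) (st : OddStr) : Prop :=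
  ∀ i β γ, IsPosition l i β γ →
    β i < st i (fun j _ => β j) (fun j _ => γ j) ∧
    st i (fun j _ => β j) (fun j _ => γ j) < l

/-- The play `(β, γ)` follows the strategy `st` of Odd. -/
def FollowsOdd (l : Ordinal) (st : OddStr) (β γ : Ordinal → Ordinal) : Prop :=
  ∀ i, i < l → γ i = st i (fun j _ => β j) (fun j _ => γ j)

/-- `st` is winning for Odd in `⅁_D`: in every play following it, Even loses, i.e.
`∪ {[α_{2i+1}, α_{2i+2}) : i < λ} ∉ D`. -/
def OddWinsWith (l : Ordinal) (D : Set (Set Ordinal)) (st : OddStr) : Prop :=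
  ∀ β γ, IsPlay l β γ → FollowsOdd l st β γ →
    (⋃ i ∈ Iio l, Ico (γ i) (β (i + 1))) ∉ D

/-- The next element of `C` above `δ`, i.e. `min (C \ (δ+1))`. -/
def nxt (C : Set Ordinal) (δ : Ordinal) : Ordinal := sInf (C ∩ Ioi δ)

/-- A condition of the forcing notion `Q¹_λ`; here `Z^p_δ = [δ, nxt C δ)` and
`d δ` is the ultrafilter `d^p_δ` on `Z^p_δ`. -/
structure Q1 (l : Ordinal) where
  γ : Ordinal
  C : Set Ordinal
  d : Ordinal → Set (Set Ordinal)
  γ_lt : γ < l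
  club : IsClubIn C l
  lim : ∀ δ ∈ C, Order.IsSuccLimit δ
  ultra : ∀ δ ∈ C, IsUltraOn (Ico δ (nxt C δ)) (d δ)

/-- The order of `Q¹_λ`. -/
def Q1le (l : Ordinal) (p q : Q1 l) : Prop :=
  p.γ ≤ q.γ ∧ p.C ∩ Iio p.γ ⊆ q.C ∧ q.C ⊆ p.C ∧
  ∀ δ ∈ q.C, ∀ A ∈ q.d δ,
    ∃ ζ ∈ p.C ∩ Ico δ (nxt q.C δ), A ∩ Ico ζ (nxt p.C ζ) ∈ p.d ζ

/-- A condition of the forcing notion `Q⁰_λ`; here `Z^p_δ = [δ, nxt C δ)` and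
`d δ` is the ultrafilter `d^p_δ` on `Z^p_δ`. -/
structure Q0 (l : Ordinal) where
  C : Set Ordinal
  d : Ordinal → Set (Set Ordinal)
  club : IsClubIn C l
  lim : ∀ δ ∈ C, Order.IsSuccLimit δ
  ultra : ∀ δ ∈ C, IsUltraOn (Ico δ (nxt C δ)) (d δ)

/-- The order relation of `Q⁰_λ`, on the underlying data. -/
def Q0leAux (Cp : Set Ordinal) (dp : Ordinal → Set (Set Ordinal))
    (Cq : Set Ordinal) (dq : Ordinal → Set (Set Ordinal)) : Prop :=
  Cq ⊆ Cp ∧ ∀ δ ∈ Cq, ∀ A ∈ dq δ,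
    ∃ ζ ∈ Cp ∩ Ico δ (nxt Cq δ), A ∩ Ico ζ (nxt Cp ζ) ∈ dp ζ

/-- The order `≤_{Q⁰_λ}`. -/
def Q0le (l : Ordinal) (p q : Q0 l) : Prop := Q0leAux p.C p.d q.C q.d

/-- The relation `≤*_{Q⁰_λ}`: for some `α < λ` the restrictions beyond `α` are
`≤_{Q⁰_λ}`-related. -/
def Q0leStar (l : Ordinal) (p q : Q0 l) : Prop :=
  ∃ α, α < l ∧ Q0leAux (p.C \ Iio α) p.d (q.C \ Iio α) q.d

/-- `fil(p) = {A ⊆ λ : (∃ ε < λ)(∀ δ ∈ C^p \ ε)(A ∩ Z^p_δ ∈ d^p_δ)}`. -/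
def fil (l : Ordinal) (p : Q0 l) : Set (Set Ordinal) :=
  {A | A ⊆ Iio l ∧ ∃ ε, ε < l ∧ ∀ δ ∈ p.C, ε ≤ δ → A ∩ Ico δ (nxt p.C δ) ∈ p.d δ}

/-- `fil(G*) = ∪ {fil(p) : p ∈ G*}`. -/
def filG (l : Ordinal) (G : Set (Q0 l)) : Set (Set Ordinal) := ⋃ p ∈ G, fil l p

/-- The relation `≤⁰`: `p ≤⁰ q` iff `fil(p) ⊆ fil(q)`. -/
def le0 (l : Ordinal) (p q : Q0 l) : Prop := fil l p ⊆ fil l q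

/-- `G` is `(<c)`-directed with respect to `le`: `G` is nonempty and every subset of `G`
of cardinality `< c` has an upper bound in `G`. -/
def DirLtOn (l : Ordinal) (c : Cardinal.{1}) (G : Set (Q0 l))
    (le : Q0 l → Q0 l → Prop) : Prop :=
  G.Nonempty ∧ ∀ S : Set (Q0 l), S ⊆ G → #S < c → ∃ r ∈ G, ∀ p ∈ S, le p r

/-- The sum `⊕^e {d_x : x ∈ X}` of ultrafilters `d x` on `Z x` along an ultrafilter `e`
on `X`. -/
def ufSum (X : Set Ordinal) (e : Set (Set Ordinal)) (Z : Ordinal → Set Ordinal)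
    (d : Ordinal → Set (Set Ordinal)) : Set (Set Ordinal) :=
  {A | A ⊆ (⋃ x ∈ X, Z x) ∧ {x | x ∈ X ∧ Z x ∩ A ∈ d x} ∈ e}

/-- The function `f_p` associated with `p ∈ Q⁰_λ`: `f_p α` is the member of `C^p` with
`otp (C^p ∩ f_p α) = ω·α + ω`. -/
def fP (l : Ordinal) (p : Q0 l) (α : Ordinal) : Ordinal :=
  sInf {β | β ∈ p.C ∧ setOtp (p.C ∩ Iio β) = Ordinal.omega0 * α + Ordinal.omega0}

/-- The space `^λλ` (functions below `l` matter). -/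
def funSp (l : Ordinal) : Set (Ordinal → Ordinal) := {f | ∀ α, α < l → f α < l}

/-- `F` is a dominating family in `^λλ`. -/
def IsDominating (l : Ordinal) (F : Set (Ordinal → Ordinal)) : Prop :=
  ∀ g ∈ funSp l, ∃ f ∈ F, ∃ α, α < l ∧ ∀ β, α < β → β < l → g β < f β

/-- The dominating number `𝔡_λ`. -/
def dLam (l : Ordinal) : Cardinal.{1} :=
  sInf {c : Cardinal | ∃ F : Set (Ordinal → Ordinal),
    F ⊆ funSp l ∧ IsDominating l F ∧ #F = c}

/-- `S` is non-stationary in `λ`. -/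
def NonStatIn (S : Set Ordinal) (l : Ordinal) : Prop :=
  ∃ C, IsClubIn C l ∧ S ∩ C = ∅

/-- `F` is a club-dominating family in `^λλ`. -/
def IsClubDominating (l : Ordinal) (F : Set (Ordinal → Ordinal)) : Prop :=
  ∀ g ∈ funSp l, ∃ f ∈ F, NonStatIn {β | β < l ∧ f β ≤ g β} l

/-- The club-dominating number `𝔡_{cl(λ)}`. -/
def dClubLam (l : Ordinal) : Cardinal.{1} :=
  sInf {c : Cardinal | ∃ F : Set (Ordinal → Ordinal),
    F ⊆ funSp l ∧ IsClubDominating l F ∧ #F = c}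

/-- `A` is a nowhere dense subset of the space `^λλ` (with basic open sets determined
by initial segments). -/
def IsNwd (l : Ordinal) (A : Set (Ordinal → Ordinal)) : Prop :=
  A ⊆ funSp l ∧
  ∀ s ∈ funSp l, ∀ α, α < l → ∃ t ∈ funSp l, ∃ α', α ≤ α' ∧ α' < l ∧
    (∀ β, β < α → t β = s β) ∧ ∀ f ∈ funSp l, (∀ β, β < α' → f β = t β) → f ∉ A

/-- `A` belongs to the ideal `M^λ_{λ,λ}`, the `(<λ)`-complete ideal generated by the
nowhere dense subsets of `^λλ`. -/
def InMIdeal (l : Ordinal) (A : Set (Ordinal → Ordinal)) : Prop :=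
  A ⊆ funSp l ∧ ∃ θ, θ < l ∧ ∃ B : Ordinal → Set (Ordinal → Ordinal),
    (∀ i, i < θ → IsNwd l (B i)) ∧ A ⊆ ⋃ i ∈ Iio θ, B i

/-- The covering number `cov(M^λ_{λ,λ})`. -/
def covM (l : Ordinal) : Cardinal.{1} :=
  sInf {c : Cardinal | ∃ S : Set (Set (Ordinal → Ordinal)),
    (∀ A ∈ S, InMIdeal l A) ∧ funSp l ⊆ ⋃₀ S ∧ #S = c}

/-!
Weak reasonableness is applied along a recursion of length `λ`: `C ε` is the intersection of
the clubs `W (nxt (C i))`, `i < ε`, where `W f` is a club with `⋃_{δ ∈ W f} [δ, δ + f δ) ∉ D`;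
regularity and uncountability of `λ` keep every `C ε` a club. The sets
`A ε = λ \ (⋃_{δ ∈ C (ε+1)} [δ, δ + nxt (C ε) δ) ∪ min (C (ε+1)))` are in `D`, and for a fixed
`α` the largest point of `C (ε+1)` below `α` strictly decreases along the `ε` with `α ∈ A ε`,
since `C (ε+1)` has a point in `(δ, δ + nxt (C ε') δ]` for every `δ ∈ C (ε'+1)`, `ε < ε'`.
Hence there are only finitely many such `ε`.
-/

universe u v

theorem finite_of_strictAntiOn {α β : Type*} [LinearOrder α] [WellFoundedLT α]
    [Preorder β] [WellFoundedLT β] {S : Set α} {φ : α → β} (hφ : StrictAntiOn φ S) :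
    S.Finite := by
  have : WellFoundedGT S :=
    StrictAnti.wellFoundedGT (f := fun x : S => φ x) fun a b hab => hφ a.2 b.2 hab
  have := Finite.of_wellFoundedLT_wellFoundedGT S
  exact S.toFinite

theorem mem_closure_of_inter_Ioo_nonempty {δ : Ordinal} {C : Set Ordinal} (hδ : δ ≠ 0)
    (h : ∀ b < δ, (C ∩ Ioo b δ).Nonempty) : δ ∈ closure C :=
  mem_closure_iff_clusterPt.2 (SuccOrder.accPt_principal.2 ⟨by simpa using hδ, h⟩).clusterPt

section Club

variable {C : Set Ordinal} {l : Ordinal}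

theorem isClubIn_iff : IsClubIn C l ↔
    C ⊆ Iio l ∧ (∀ δ < l, δ ∈ closure C → δ ∈ C) ∧ ∀ α < l, ∃ β ∈ C, α < β := by
  refine and_congr_right fun _ => and_congr_left fun _ => ⟨fun h δ hδ hcl => ?_, ?_⟩
  · by_contra hδC
    obtain ⟨⟨x, hxC, hxδ⟩, hsup⟩ := ((mem_closure_tfae δ C).out 0 2).1 hcl
    have hIic : C ∩ Iic δ = C ∩ Iio δ := by
      ext y
      simp only [mem_inter_iff, mem_Iic, mem_Iio]
      exact and_congr_right fun hy =>
        ⟨fun hyδ => hyδ.lt_of_ne (by rintro rfl; exact hδC hy), le_of_lt⟩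
    refine hδC (h δ hδ ?_ (hIic ▸ hsup))
    rintro rfl
    exact hδC (nonpos_iff_eq_zero.1 (mem_Iic.1 hxδ) ▸ hxC)
  · intro h δ hδ hδ0 hsup
    have hne : (C ∩ Iio δ).Nonempty := by
      by_contra hempty
      rw [not_nonempty_iff_eq_empty.1 hempty, csSup_empty] at hsup
      exact hδ0 hsup.symm
    refine h δ hδ (closure_mono (inter_subset_left (t := Iio δ)) ?_)
    have hcl := csSup_mem_closure hne (bddAbove_Iio.mono inter_subset_right)
    rwa [hsup] at hcl

theorem IsClubIn.nonempty (hC : IsClubIn C l) (hl : 0 < l) : C.Nonempty :=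
  let ⟨β, hβ, _⟩ := hC.2.2 0 hl
  ⟨β, hβ⟩

theorem IsClubIn.sInf_lt (hC : IsClubIn C l) (hl : 0 < l) : sInf C < l :=
  hC.1 (csInf_mem (hC.nonempty hl))

theorem IsClubIn.nxt_mem_inter_Ioi (hC : IsClubIn C l) {β : Ordinal} (hβ : β < l) :
    nxt C β ∈ C ∩ Ioi β :=
  csInf_mem (hC.2.2 β hβ)

theorem nxt_anti {C C' : Set Ordinal} {β : Ordinal} (h : C ⊆ C') (hne : (C ∩ Ioi β).Nonempty) :
    nxt C' β ≤ nxt C β :=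
  csInf_le_csInf (OrderBot.bddBelow _) hne (inter_subset_inter_left _ h)

theorem IsClubIn.nxt_mem_Flam (hC : IsClubIn C l) : nxt C ∈ Flam l :=
  ⟨fun _ hα => hC.1 (hC.nxt_mem_inter_Ioi hα).1,
    fun _ _ hαβ hβ => csInf_le_csInf (OrderBot.bddBelow _) (hC.2.2 _ hβ)
      (inter_subset_inter_right _ (Ioi_subset_Ioi hαβ)),
    fun γ hγ => ⟨γ, hγ, (hC.nxt_mem_inter_Ioi hγ).2.le⟩⟩

theorem IsClubIn.sSup_inter_Iic_mem (hC : IsClubIn C l) {α : Ordinal} (hα : α < l)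
    (hne : (C ∩ Iic α).Nonempty) : sSup (C ∩ Iic α) ∈ C ∩ Iic α := by
  have hle : sSup (C ∩ Iic α) ≤ α := csSup_le hne fun _ hx => hx.2
  refine ⟨(isClubIn_iff.1 hC).2.1 _ (hle.trans_lt hα) ?_, hle⟩
  exact closure_mono inter_subset_left
    (csSup_mem_closure hne (bddAbove_Iic.mono inter_subset_right))

end Club

theorem isClubIn_iInter {κ : Cardinal.{u}} (hreg : κ.IsRegular) (hunc : ℵ₀ < κ) {ι : Type v}
    (hι : Cardinal.lift.{u} #ι < Cardinal.lift.{v} κ) {C : ι → Set Ordinal.{u}}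
    (hC : ∀ i, IsClubIn (C i) κ.ord) : IsClubIn (Iio κ.ord ∩ ⋂ i, C i) κ.ord := by
  refine isClubIn_iff.2 ⟨inter_subset_left, fun δ hδ hcl => ⟨hδ, mem_iInter.2 fun i => ?_⟩,
    fun α hα => ?_⟩
  · exact (isClubIn_iff.1 (hC i)).2.1 δ hδ
      (closure_mono (inter_subset_right.trans (iInter_subset _ i)) hcl)
  have hcof : Cardinal.lift.{u} #ι < (Ordinal.lift.{v} κ.ord).cof := by
    rwa [← lift_cof, hreg.cof_ord]
  set g : Ordinal → Ordinal := fun β => ⨆ i, nxt (C i) β + 1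
  have hg : ∀ β < κ.ord, g β < κ.ord := fun β hβ =>
    lift_iSup_add_one_lt_of_lt_cof hcof fun i => (hC i).1 ((hC i).nxt_mem_inter_Ioi hβ).1
  -- `δ` is the limit of an `ω`-chain above `α` that interleaves points of every `C i`
  set δ := nfp g (Order.succ α)
  have hδ : δ < κ.ord :=
    nfp_lt_ord (by rwa [hreg.cof_ord]) hg ((isSuccLimit_ord hunc.le).succ_lt hα)
  have hαδ : α < δ := (Order.lt_succ α).trans_le (le_nfp _ _)
  refine ⟨δ, ⟨hδ, mem_iInter.2 fun i => (isClubIn_iff.1 (hC i)).2.1 δ hδ ?_⟩, hαδ⟩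
  refine mem_closure_of_inter_Ioo_nonempty ((zero_le (a := α)).trans_lt hαδ).ne' fun b hb => ?_
  obtain ⟨n, hn⟩ := lt_nfp_iff.1 hb
  set x := g^[n] (Order.succ α)
  have hx : x < κ.ord := (iterate_le_nfp _ _ n).trans_lt hδ
  have hbdd : BddAbove (range fun j => nxt (C j) x + 1) := ⟨κ.ord, by
    rintro _ ⟨j, rfl⟩
    exact Order.add_one_le_of_lt ((hC j).1 ((hC j).nxt_mem_inter_Ioi hx).1)⟩
  obtain ⟨hyC, hxy⟩ := (hC i).nxt_mem_inter_Ioi hx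
  refine ⟨_, hyC, hn.trans hxy, ?_⟩
  calc nxt (C i) x < nxt (C i) x + 1 := lt_add_one _
    _ ≤ g x := le_ciSup hbdd i
    _ = g^[n + 1] (Order.succ α) := (Function.iterate_succ_apply' _ _ _).symm
    _ ≤ δ := iterate_le_nfp _ _ _

theorem IsUltraOn.diff_union_mem {Z A B : Set Ordinal} {D : Set (Set Ordinal)}
    (hD : IsUltraOn Z D) (hA : A ⊆ Z) (hB : B ⊆ Z) (hAD : A ∉ D) (hBD : B ∉ D) :
    Z \ (A ∪ B) ∈ D :=
  sdiff_inter_sdiff ▸ hD.2.2.2.2.1 _ _ ((hD.2.2.2.2.2 A hA).resolve_left hAD)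
    ((hD.2.2.2.2.2 B hB).resolve_left hBD)

theorem IsUltraOn.notMem_of_subset {Z A B : Set Ordinal} {D : Set (Set Ordinal)}
    (hD : IsUltraOn Z D) (hAB : A ⊆ B) (hBZ : B ⊆ Z) (hBD : B ∉ D) : A ∉ D :=
  fun hAD => hBD (hD.2.2.2.1 A B hAD hAB hBZ)

theorem IsUniformOn.Iio_notMem {κ : Cardinal} {D : Set (Set Ordinal)}
    (hU : IsUniformOn κ.ord D) {b : Ordinal} (hb : b < κ.ord) : Iio b ∉ D := by
  intro hbD
  have hcard := hU _ hbD
  rw [Cardinal.mk_Iio_ordinal, Cardinal.mk_Iio_ordinal, Cardinal.lift_inj, card_ord] at hcard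
  exact (Cardinal.lt_ord.1 hb).ne hcard

def intervalUnion (C : Set Ordinal) (f : Ordinal → Ordinal) : Set Ordinal :=
  ⋃ δ ∈ C, Ico δ (δ + f δ)

theorem intervalUnion_subset_Iio {C : Set Ordinal} {f : Ordinal → Ordinal} {l : Ordinal}
    (hl : IsPrincipal (· + ·) l) (hC : C ⊆ Iio l) (hf : ∀ δ ∈ C, f δ < l) :
    intervalUnion C f ⊆ Iio l := by
  simp only [intervalUnion, iUnion_subset_iff]
  exact fun δ hδ x hx => hx.2.trans (hl (hC hδ) (hf δ hδ))

theorem intervalUnion_mono_left {C C' : Set Ordinal} {f : Ordinal → Ordinal} (h : C ⊆ C') :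
    intervalUnion C f ⊆ intervalUnion C' f :=
  biUnion_subset_biUnion_left h

def clubChain (l : Ordinal) (W : (Ordinal → Ordinal) → Set Ordinal) (ε : Ordinal) :
    Set Ordinal :=
  Iio l ∩ ⋂ i : Iio ε, W (nxt (clubChain l W i))
termination_by ε
decreasing_by exact i.2

section ClubChain

variable {l : Ordinal} {W : (Ordinal → Ordinal) → Set Ordinal}

theorem clubChain_anti {ε ε' : Ordinal} (h : ε ≤ ε') : clubChain l W ε' ⊆ clubChain l W ε := by
  rw [clubChain, clubChain]
  exact inter_subset_inter_right _
    (subset_iInter fun i => iInter_subset_of_subset ⟨i, i.2.trans_le h⟩ subset_rfl)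

theorem clubChain_add_one_subset (ε : Ordinal) :
    clubChain l W (ε + 1) ⊆ W (nxt (clubChain l W ε)) := by
  rw [clubChain]
  exact inter_subset_right.trans (iInter_subset_of_subset ⟨ε, lt_add_one ε⟩ subset_rfl)

theorem isClubIn_clubChain {κ : Cardinal} (hreg : κ.IsRegular) (hunc : ℵ₀ < κ)
    (hW : ∀ f ∈ Flam κ.ord, IsClubIn (W f) κ.ord)
    {ε : Ordinal} (hε : ε < κ.ord) : IsClubIn (clubChain κ.ord W ε) κ.ord := by
  induction ε using WellFoundedLT.induction with
  | _ ε ih =>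
    rw [clubChain]
    refine isClubIn_iInter hreg hunc ?_ fun i => hW _ (ih i i.2 (i.2.trans hε)).nxt_mem_Flam
    rw [Cardinal.mk_Iio_ordinal, Cardinal.lift_lift, Cardinal.lift_lt]
    exact Cardinal.lt_ord.1 hε

end ClubChain

theorem finite_setOf_notMem_intervalUnion {l α : Ordinal} {C : Ordinal → Set Ordinal}
    (hl : Order.IsSuccLimit l) (hC : ∀ ε < l, IsClubIn (C ε) l)
    (hanti : ∀ ⦃ε ε'⦄, ε ≤ ε' → C ε' ⊆ C ε) (hα : α < l) :
    {ε | ε < l ∧ sInf (C (ε + 1)) ≤ α ∧ α ∉ intervalUnion (C (ε + 1)) (nxt (C ε))}.Finite := by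
  have hmax : ∀ {ε}, ε < l → sInf (C (ε + 1)) ≤ α →
      sSup (C (ε + 1) ∩ Iic α) ∈ C (ε + 1) ∩ Iic α := fun hε hmin =>
    (hC _ (hl.add_one_lt hε)).sSup_inter_Iic_mem hα
      ⟨_, csInf_mem ((hC _ (hl.add_one_lt hε)).nonempty hl.pos), hmin⟩
  refine finite_of_strictAntiOn (φ := fun ε => sSup (C (ε + 1) ∩ Iic α)) ?_
  rintro ε ⟨hε, hminε, -⟩ ε' ⟨hε', hminε', hαε'⟩ hεε'
  set δ := sSup (C (ε' + 1) ∩ Iic α)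
  obtain ⟨hδC, hδα⟩ := hmax hε' hminε'
  have hsub : C ε' ⊆ C (ε + 1) := hanti (Order.add_one_le_of_lt hεε')
  have hδle : δ ≤ sSup (C (ε + 1) ∩ Iic α) :=
    le_csSup (bddAbove_Iic.mono inter_subset_right) ⟨hsub (hanti (le_add_right le_rfl) hδC), hδα⟩
  refine hδle.lt_of_ne fun hδeq => ?_
  -- the point of `C (ε + 1)` next after `δ` is still `≤ α`, contradicting the maximality of `δ`
  obtain ⟨hyC, hδy⟩ := (hC _ (hl.add_one_lt hε)).nxt_mem_inter_Ioi (hδα.trans_lt hα)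
  have hyα : nxt (C (ε + 1)) δ ≤ α := calc
    nxt (C (ε + 1)) δ ≤ nxt (C ε') δ := nxt_anti hsub ((hC ε' hε').2.2 δ (hδα.trans_lt hα))
    _ ≤ δ + nxt (C ε') δ := le_add_self
    _ ≤ α := not_lt.1 fun h => hαε' (mem_iUnion₂.2 ⟨δ, hδC, hδα, h⟩)
  exact (hδy.trans_le (le_csSup (bddAbove_Iic.mono inter_subset_right) ⟨hyC, hyα⟩)).ne hδeq

/-- Theorem 1.8: every weakly reasonable uniform ultrafilter on `λ` is regular:
there is a sequence `⟨A_ε : ε < λ⟩` of members of `D` such that every `α < λ`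
belongs to only finitely many `A_ε`. -/
theorem stmt6 (κ : Cardinal) (hreg : κ.IsRegular) (hunc : ℵ₀ < κ)
    (D : Set (Set Ordinal)) (hD : IsUltrafilterOn κ.ord D)
    (hU : IsUniformOn κ.ord D) (hwr : WeaklyReasonable κ.ord D) :
    ∃ A : Ordinal → Set Ordinal, (∀ ε, ε < κ.ord → A ε ∈ D) ∧
      ∀ α, α < κ.ord → Set.Finite {ε | ε < κ.ord ∧ α ∈ A ε} := by
  have hl : Order.IsSuccLimit κ.ord := isSuccLimit_ord hunc.le
  choose! W hWclub hWD using hwr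
  set C := clubChain κ.ord W
  have hC : ∀ ε < κ.ord, IsClubIn (C ε) κ.ord := fun ε hε =>
    isClubIn_clubChain hreg hunc hWclub hε
  refine ⟨fun ε => Iio κ.ord \ (intervalUnion (C (ε + 1)) (nxt (C ε)) ∪ Iio (sInf (C (ε + 1)))),
    fun ε hε => ?_, fun α hα => ?_⟩
  · have hf := (hC ε hε).nxt_mem_Flam
    have hWsub : intervalUnion (W (nxt (C ε))) (nxt (C ε)) ⊆ Iio κ.ord :=
      intervalUnion_subset_Iio (isPrincipal_add_ord hunc.le) (hWclub _ hf).1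
        fun δ hδ => hf.1 δ ((hWclub _ hf).1 hδ)
    have hsub : intervalUnion (C (ε + 1)) (nxt (C ε)) ⊆
        intervalUnion (W (nxt (C ε))) (nxt (C ε)) :=
      intervalUnion_mono_left (clubChain_add_one_subset ε)
    have hmin := (hC _ (hl.add_one_lt hε)).sInf_lt hl.pos
    exact hD.diff_union_mem (hsub.trans hWsub) (Iio_subset_Iio hmin.le)
      (hD.notMem_of_subset hsub hWsub (hWD _ hf)) (hU.Iio_notMem hmin)
  · refine (finite_setOf_notMem_intervalUnion hl hC (fun _ _ h => clubChain_anti h) hα).subset ?_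
    rintro ε ⟨hε, hαA⟩
    simp only [mem_sdiff, mem_union, mem_Iio, not_or, not_lt] at hαA
    exact ⟨hε, hαA.2.2, hαA.2.1⟩

end Sh830

end
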